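/- arXiv:1905.04731 — 2 statements merged into one kernel-verified Lean document; each statement's English description precedes it below -/
import Mathlib

section
/- Let (R, m, k) be a commutative Noetherian local ring with m² = 0 and e = dim_k(m) ≥ 1. Let M = R^{⊕α} ⊕ k^{⊕β} for some integers α, β ≥ 0. Then there exist a short exact sequence 0 → S → F → M → 0 with F finitely generated free (so S is a first syzygy of M) and a short exact sequence of R-modules 0 → M^{⊕e²} → R^{⊕(e²α + eβ)} → S → 0. In particular, M has finite reducing projective dimension (with a reducing sequence of length 1 ending in a free module). -/
open CategoryTheory

universe u

variable (R : Type u) [CommRing R]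

/-- `SES R A B C` : there is a short exact sequence `0 → A → B → C → 0` of `R`-modules. -/
def SES (A B C : ModuleCat.{u} R) : Prop :=
  ∃ (f : A →ₗ[R] B) (g : B →ₗ[R] C),
    Function.Injective f ∧ Function.Surjective g ∧ LinearMap.range f = LinearMap.ker g

/-- A finitely generated free module. -/
def IsFinFree (F : ModuleCat.{u} R) : Prop :=
  Module.Finite R F ∧ Module.Free R F

/-- `IsSyzygy R n S K` : `S` is an `n`-th syzygy of `K`, i.e. there is an exact sequence
`0 → S → F_{n-1} → ⋯ → F_0 → K → 0` with each `F_j` finitely generated free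
(for `n = 0` this just means `S ≅ K`). -/
def IsSyzygy : ℕ → ModuleCat.{u} R → ModuleCat.{u} R → Prop
  | 0, S, K => Nonempty (S ≃ₗ[R] K)
  | n + 1, S, K => ∃ T F : ModuleCat.{u} R, IsSyzygy n T K ∧ IsFinFree R F ∧ SES R S F T

/-- The direct sum `M^{⊕ a}`. -/
def MPow (M : ModuleCat.{u} R) (a : ℕ) : ModuleCat.{u} R := ModuleCat.of R (Fin a → M)

/-- `IsReducingSeq R K` : the finitely generated modules `K 0, …, K r` form a reducing
sequence, i.e. there are positive integers `a i, b i, n i` and short exact sequences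
`0 → (K i)^{⊕ a i} → K (i+1) → S i → 0` where `S i` is an `(n i)`-th syzygy
of `(K i)^{⊕ b i}`. -/
def IsReducingSeq {r : ℕ} (K : Fin (r + 1) → ModuleCat.{u} R) : Prop :=
  (∀ i, Module.Finite R (K i)) ∧
  ∃ a b n : Fin r → ℕ,
    (∀ i, 0 < a i) ∧ (∀ i, 0 < b i) ∧ (∀ i, 0 < n i) ∧
    ∀ i : Fin r, ∃ S : ModuleCat.{u} R,
      IsSyzygy R (n i) S (MPow R (K i.castSucc) (b i)) ∧
      SES R (MPow R (K i.castSucc) (a i)) (K i.succ) S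

/-- `ExtVanishes R M N i` : the `R`-module `Ext^i_R(M, N)` is zero. -/
def ExtVanishes (M N : ModuleCat.{u} R) (i : ℕ) : Prop :=
  Subsingleton (((Ext R (ModuleCat.{u} R) i).obj (Opposite.op M)).obj N)

/-- A totally reflexive module. -/
def IsTotallyReflexive (M : ModuleCat.{u} R) : Prop :=
  Function.Bijective (Module.Dual.eval R M) ∧
  ∀ i : ℕ, 1 ≤ i →
    ExtVanishes R M (ModuleCat.of R R) i ∧
    ExtVanishes R (ModuleCat.of R (Module.Dual R M)) (ModuleCat.of R R) i

/-- `ResolvedBy R P m M` : there is an exact sequence `0 → G_m → ⋯ → G_0 → M → 0`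
in which each `G_j` satisfies `P`. -/
def ResolvedBy (P : ModuleCat.{u} R → Prop) : ℕ → ModuleCat.{u} R → Prop
  | 0, M => ∃ G : ModuleCat.{u} R, P G ∧ Nonempty (G ≃ₗ[R] M)
  | m + 1, M => ∃ G S : ModuleCat.{u} R, P G ∧ SES R S G M ∧ ResolvedBy P m S

/-- Finite Gorenstein dimension. -/
def FiniteGdim (M : ModuleCat.{u} R) : Prop :=
  ∃ m : ℕ, ResolvedBy R (IsTotallyReflexive R) m M

/-- Finite projective dimension. -/
def FinitePd (M : ModuleCat.{u} R) : Prop :=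
  ∃ m : ℕ, ResolvedBy R (fun G => Module.Projective R G) m M

/-- `HasRedSeqTo R P M` : `M` admits a reducing sequence `K_0 = M, K_1, …, K_r`
whose last module `K_r` satisfies `P`. -/
def HasRedSeqTo (P : ModuleCat.{u} R → Prop) (M : ModuleCat.{u} R) : Prop :=
  ∃ (r : ℕ) (K : Fin (r + 1) → ModuleCat.{u} R),
    K 0 = M ∧ IsReducingSeq R K ∧ P (K (Fin.last r))

/-- Finite reducing Gorenstein dimension. -/
def FiniteRedGdim (M : ModuleCat.{u} R) : Prop :=
  HasRedSeqTo R (FiniteGdim R) M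

/-- Finite reducing projective dimension. -/
def FiniteRedPd (M : ModuleCat.{u} R) : Prop :=
  HasRedSeqTo R (FinitePd R) M


/-!
Since `m² = 0`, the maximal ideal is a `k`-vector space, so `m ≅ k^e`. The free cover
`R^α ⊕ R^β → R^α ⊕ k^β` has kernel `S = m^β ≅ k^{eβ}`, and `k^{eβ}` is the cokernel of the
inclusion `R^{e²α} ⊕ m^{eβ} → R^{e²α} ⊕ R^{eβ}`, whose source is `R^{e²α} ⊕ k^{e²β} ≅ M^{e²}`.
This second sequence is a reducing sequence of length one from `M` to a free module.
-/

open IsLocalRing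

section ShortExactSequences

variable {R : Type u} [CommRing R]

theorem SES.congr {A B C A' B' C' : ModuleCat.{u} R} (h : SES R A B C)
    (eA : A ≃ₗ[R] A') (eB : B ≃ₗ[R] B') (eC : C ≃ₗ[R] C') : SES R A' B' C' := by
  obtain ⟨f, g, hf, hg, hfg⟩ := h
  refine ⟨eB.toLinearMap ∘ₗ f ∘ₗ eA.symm.toLinearMap, eC.toLinearMap ∘ₗ g ∘ₗ eB.symm.toLinearMap,
    eB.injective.comp (hf.comp eA.symm.injective),
    eC.surjective.comp (hg.comp eB.symm.surjective), ?_⟩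
  rw [LinearMap.range_comp, LinearMap.range_comp_of_range_eq_top _ (LinearEquiv.range _),
    LinearEquiv.ker_comp, LinearMap.ker_comp, hfg, Submodule.map_equiv_eq_comap_symm]

theorem SES.prod {A B C A' B' C' : ModuleCat.{u} R} (h : SES R A B C) (h' : SES R A' B' C') :
    SES R (.of R (A × A')) (.of R (B × B')) (.of R (C × C')) := by
  obtain ⟨f, g, hf, hg, hfg⟩ := h
  obtain ⟨f', g', hf', hg', hfg'⟩ := h'
  refine ⟨f.prodMap f', g.prodMap g', hf.prodMap hf', hg.prodMap hg', ?_⟩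
  rw [LinearMap.ker_prodMap, ← hfg, ← hfg']
  ext ⟨y, y'⟩
  simp

-- The index type lives in `Type` so that `ι → A` stays in the universe of `A`.
theorem SES.pi (ι : Type) {A B C : ModuleCat.{u} R} (h : SES R A B C) :
    SES R (.of R (ι → A)) (.of R (ι → B)) (.of R (ι → C)) := by
  obtain ⟨f, g, hf, hg, hfg⟩ := h
  refine ⟨.piMap fun _ => f, .piMap fun _ => g, Function.Injective.piMap fun _ => hf,
    Function.Surjective.piMap fun _ => hg, ?_⟩
  ext y
  simp only [LinearMap.mem_range, LinearMap.mem_ker, LinearMap.coe_piMap, funext_iff, Pi.map_apply,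
    Pi.zero_apply, ← LinearMap.mem_ker (f := g), ← hfg]
  exact ⟨fun ⟨x, hx⟩ i => ⟨x i, hx i⟩, Classical.skolem.mp⟩

theorem SES.zero_left (X : ModuleCat.{u} R) : SES R (.of R PUnit) X X :=
  ⟨0, .id, Function.injective_of_subsingleton _, Function.surjective_id, by simp⟩

theorem SES.zero_right (X : ModuleCat.{u} R) : SES R X X (.of R PUnit) :=
  ⟨.id, 0, Function.injective_id, Function.surjective_to_subsingleton _, by simp⟩

end ShortExactSequences

theorem IsLocalRing.ses_maximalIdeal {R : Type u} [CommRing R] [IsLocalRing R] :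
    SES R (.of R (maximalIdeal R)) (.of R R) (.of R (ResidueField R)) := by
  refine ⟨(maximalIdeal R).subtype, Algebra.linearMap R (ResidueField R), Subtype.val_injective,
    residue_surjective, ?_⟩
  ext x
  simp [residue_eq_zero_iff]

section Reindexing

variable (R : Type u) [CommRing R] (X : Type*) [AddCommGroup X] [Module R X]

def LinearEquiv.piProd (ι Y : Type*) [AddCommGroup Y] [Module R Y] :
    (ι → X × Y) ≃ₗ[R] (ι → X) × (ι → Y) :=
  { Equiv.arrowProdEquivProdArrow ι (fun _ => X) (fun _ => Y) with
    map_add' := fun _ _ => rfl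
    map_smul' := fun _ _ => rfl }

def LinearEquiv.piFinMul {a b c : ℕ} (h : a = c * b) : (Fin a → X) ≃ₗ[R] (Fin c → Fin b → X) :=
  (LinearEquiv.funCongrLeft R X (finProdFinEquiv.trans (finCongr h.symm))).trans
    (LinearEquiv.curry R X (Fin c) (Fin b))

def LinearEquiv.piFinAdd (a b : ℕ) : ((Fin a → X) × (Fin b → X)) ≃ₗ[R] (Fin (a + b) → X) :=
  ((LinearEquiv.funCongrLeft R X finSumFinEquiv).trans
    (LinearEquiv.sumArrowLequivProdArrow _ _ R X)).symm

end Reindexing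

theorem Ideal.toCotangent_injective_of_sq_eq_bot {R : Type u} [CommRing R] {I : Ideal R}
    (h : I ^ 2 = ⊥) : Function.Injective I.toCotangent := by
  refine (injective_iff_map_eq_zero _).2 fun x hx => ?_
  rwa [← LinearMap.mem_ker, Ideal.mem_toCotangent_ker, h, Ideal.mem_bot,
    ZeroMemClass.coe_eq_zero] at hx

noncomputable def piMaximalIdealEquiv {R : Type u} [CommRing R] [IsLocalRing R]
    [Module.Finite (ResidueField R) (CotangentSpace R)] (hm2 : maximalIdeal R ^ 2 = ⊥) {e : ℕ}
    (he : e = Module.finrank (ResidueField R) (CotangentSpace R)) (n : ℕ) :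
    (Fin n → maximalIdeal R) ≃ₗ[R] (Fin (e * n) → ResidueField R) :=
  let toCotangent : maximalIdeal R ≃ₗ[R] CotangentSpace R := .ofBijective _
    ⟨Ideal.toCotangent_injective_of_sq_eq_bot hm2, Ideal.toCotangent_surjective _⟩
  let basis := Module.finBasisOfFinrankEq (ResidueField R) (CotangentSpace R) he.symm
  (LinearEquiv.piCongrRight fun _ => toCotangent.trans (basis.equivFun.restrictScalars R)).trans
    (LinearEquiv.piFinMul R _ (mul_comm e n)).symm

section ResidueSequences

variable {R : Type u} [CommRing R] [IsLocalRing R] (ι κ : Type)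

theorem ses_free_prod_residue :
    SES R (.of R (κ → maximalIdeal R)) (.of R ((ι → R) × (κ → R)))
      (.of R ((ι → R) × (κ → ResidueField R))) :=
  ((SES.zero_left (.of R (ι → R))).prod (ses_maximalIdeal.pi κ)).congr
    LinearEquiv.uniqueProd (.refl R _) (.refl R _)

theorem ses_pi_residue :
    SES R (.of R ((ι → R) × (κ → maximalIdeal R))) (.of R ((ι → R) × (κ → R)))
      (.of R (κ → ResidueField R)) :=
  ((SES.zero_right (.of R (ι → R))).prod (ses_maximalIdeal.pi κ)).congr
    (.refl R _) (.refl R _) LinearEquiv.uniqueProd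

end ResidueSequences

theorem ses_pow_free_prod_residue {R : Type u} [CommRing R] [IsLocalRing R]
    [Module.Finite (ResidueField R) (CotangentSpace R)]
    (hm2 : maximalIdeal R ^ 2 = ⊥) {e : ℕ}
    (he : e = Module.finrank (ResidueField R) (CotangentSpace R)) (α β : ℕ) :
    SES R (MPow R (.of R ((Fin α → R) × (Fin β → ResidueField R))) (e ^ 2))
      (.of R (Fin (e ^ 2 * α + e * β) → R)) (.of R (Fin β → maximalIdeal R)) :=
  (ses_pi_residue (Fin (e ^ 2 * α)) (Fin (e * β))).congr
    (((LinearEquiv.piFinMul R R rfl).prodCongr ((piMaximalIdealEquiv hm2 he _).trans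
      (LinearEquiv.piFinMul R _ (by ring)))).trans (LinearEquiv.piProd R _ _ _).symm)
    (LinearEquiv.piFinAdd R R _ _) (piMaximalIdealEquiv hm2 he β).symm

theorem finiteRedPd_of_ses {R : Type u} [CommRing R] {M S F G : ModuleCat.{u} R}
    [Module.Finite R M] (hF : IsFinFree R F) (hG : IsFinFree R G) (hS : SES R S F M) {a : ℕ}
    (ha : 0 < a) (hMS : SES R (MPow R M a) G S) : FiniteRedPd R M := by
  have hsyz : IsSyzygy R 1 S (MPow R M 1) :=
    ⟨M, F, ⟨(LinearEquiv.funUnique (Fin 1) R M).symm⟩, hF, hS⟩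
  have hfin : ∀ i, Module.Finite R (![M, G] i) := Fin.forall_fin_two.2 ⟨‹_›, hG.1⟩
  have hpd : FinitePd R G := by
    have := hG.2
    exact ⟨0, G, inferInstance, ⟨.refl R G⟩⟩
  refine ⟨1, ![M, G], rfl, ⟨hfin, fun _ => a, fun _ => 1, fun _ => 1, fun _ => ha,
    fun _ => one_pos, fun _ => one_pos, fun i => ?_⟩, hpd⟩
  obtain rfl := Subsingleton.elim i 0
  exact ⟨S, hsyz, hMS⟩

theorem redPd_of_free_plus_residue
    (R : Type u) [CommRing R] [IsNoetherianRing R] [IsLocalRing R]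
    (hm2 : (IsLocalRing.maximalIdeal R) ^ 2 = ⊥)
    (e : ℕ)
    (he : e = Module.finrank (IsLocalRing.ResidueField R) (IsLocalRing.CotangentSpace R))
    (he1 : 1 ≤ e) (α β : ℕ) :
    (∃ S F : ModuleCat.{u} R, IsFinFree R F ∧
      SES R S F (ModuleCat.of R ((Fin α → R) × (Fin β → IsLocalRing.ResidueField R))) ∧
      SES R (MPow R (ModuleCat.of R ((Fin α → R) × (Fin β → IsLocalRing.ResidueField R))) (e ^ 2))
        (ModuleCat.of R (Fin (e ^ 2 * α + e * β) → R)) S) ∧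
    FiniteRedPd R (ModuleCat.of R ((Fin α → R) × (Fin β → IsLocalRing.ResidueField R))) := by
  have hF : IsFinFree R (.of R ((Fin α → R) × (Fin β → R))) :=
    ⟨inferInstance, inferInstance⟩
  have hG : IsFinFree R (.of R (Fin (e ^ 2 * α + e * β) → R)) :=
    ⟨inferInstance, inferInstance⟩
  have hS := ses_free_prod_residue (R := R) (Fin α) (Fin β)
  have hMS := ses_pow_free_prod_residue hm2 he α β
  exact ⟨⟨_, _, hF, hS, hMS⟩, finiteRedPd_of_ses hF hG hS (pow_pos he1 2) hMS⟩
end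

section
/- Let R be a commutative Noetherian local ring and X a finitely generated torsionless R-module, i.e., the natural evaluation map X → Hom_R(Hom_R(X,R),R) is injective. Then there exist a finitely generated free R-module F, a finitely generated R-module X₁, and a short exact sequence 0 → X → F → X₁ → 0 such that Ext^1_R(X₁, R) = 0. -/
open CategoryTheory

universe u

variable (R : Type u) [CommRing R]

/-!
Choose generators `ψ₁, …, ψₙ` of the dual `X* = Hom(X, R)`, which is finitely generated since `R`
is Noetherian, and put `f = (ψ₁, …, ψₙ) : X → Rⁿ`. Torsionlessness makes `f` injective, and
`f* : (Rⁿ)* → X*` is surjective since it hits every `ψᵢ`. For `X₁ = coker f` the long exact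
sequence gives `Ext¹(X₁, R) = coker f* = 0`; concretely, this is read off the projective resolution
of `X₁` obtained by splicing a projective resolution of `X` onto `0 → X → Rⁿ → X₁ → 0`.
-/

open Limits

namespace CategoryTheory.ProjectiveResolution

section Augmentation

variable {C : Type*} [Category* C] [Abelian C] {X : C} (P : ProjectiveResolution X)

/-- `P.π.f 0`, with codomain `X` rather than `((single₀ C).obj X).X 0`, which rewriting does not
see through. -/
noncomputable def augmentation : P.complex.X 0 ⟶ X := (ChainComplex.toSingle₀Equiv _ _ P.π).1

lemma complex_d_comp_augmentation : P.complex.d 1 0 ≫ P.augmentation = 0 :=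
  (ChainComplex.toSingle₀Equiv _ _ P.π).2

lemma exact_augmentation : (ShortComplex.mk _ _ P.complex_d_comp_augmentation).Exact := P.exact₀

instance : Epi P.augmentation := inferInstanceAs (Epi (P.π.f 0))

end Augmentation

variable {C : Type*} [Category* C] [Abelian C] {S : ShortComplex C} (P : ProjectiveResolution S.X₁)

noncomputable def augmentComplex : ChainComplex C ℕ :=
  P.complex.augment (P.augmentation ≫ S.f)
    (by rw [← Category.assoc, P.complex_d_comp_augmentation, zero_comp])

lemma augmentComplex_exactAt_succ_succ (n : ℕ) : P.augmentComplex.ExactAt (n + 2) := by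
  rw [HomologicalComplex.exactAt_iff' _ (n + 3) (n + 2) (n + 1) (by simp) (by simp)]
  exact (HomologicalComplex.exactAt_iff' _ (n + 2) (n + 1) n (by simp) (by simp)).1
    (P.complex_exactAt_succ n)

lemma augmentComplex_exactAt_one [Mono S.f] : P.augmentComplex.ExactAt 1 := by
  rw [HomologicalComplex.exactAt_iff' _ 2 1 0 (by simp) (by simp)]
  let φ : ShortComplex.mk _ _ P.complex_d_comp_augmentation ⟶ P.augmentComplex.sc' 2 1 0 :=
    { τ₁ := 𝟙 (P.complex.X 1), τ₂ := 𝟙 (P.complex.X 0), τ₃ := S.f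
      comm₁₂ := (Category.id_comp _).trans (Category.comp_id _).symm
      comm₂₃ := Category.id_comp _ }
  have : Epi φ.τ₁ := inferInstanceAs (Epi (𝟙 (P.complex.X 1)))
  have : IsIso φ.τ₂ := inferInstanceAs (IsIso (𝟙 (P.complex.X 0)))
  have : Mono φ.τ₃ := inferInstanceAs (Mono S.f)
  exact (ShortComplex.exact_iff_of_epi_of_isIso_of_mono φ).1 P.exact_augmentation

lemma exact_augmentation_comp (hS : S.Exact) :
    (ShortComplex.mk (P.augmentation ≫ S.f) S.g
      (by rw [Category.assoc, S.zero, comp_zero])).Exact := by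
  let φ : ShortComplex.mk (P.augmentation ≫ S.f) S.g
      (by rw [Category.assoc, S.zero, comp_zero]) ⟶ S :=
    { τ₁ := P.augmentation, τ₂ := 𝟙 S.X₂, τ₃ := 𝟙 S.X₃ }
  exact (ShortComplex.exact_iff_of_epi_of_isIso_of_mono φ).2 hS

noncomputable def ofShortExact (hS : S.ShortExact) [Projective S.X₂] :
    ProjectiveResolution S.X₃ where
  complex := P.augmentComplex
  projective
    | 0 => ‹_›
    | n + 1 => inferInstanceAs (Projective (P.complex.X n))
  π := (ChainComplex.toSingle₀Equiv _ _).symm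
    ⟨S.g, show (P.augmentation ≫ S.f) ≫ S.g = 0 by rw [Category.assoc, S.zero, comp_zero]⟩
  quasiIso := ⟨fun n => by
    match n with
    | 0 =>
      rw [ChainComplex.quasiIsoAt₀_iff, ShortComplex.quasiIso_iff_of_zeros']
      · refine (ShortComplex.exact_and_epi_g_iff_of_iso ?_).2
          ⟨P.exact_augmentation_comp hS.exact, hS.epi_g⟩
        refine ShortComplex.isoMk (Iso.refl _) (Iso.refl _) (Iso.refl _)
          ((Category.id_comp _).trans (Category.comp_id _).symm) ?_
        exact (Category.id_comp _).trans
          ((ChainComplex.toSingle₀Equiv_symm_apply_f_zero (C := P.augmentComplex) S.g _).symm.trans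
            (Category.comp_id _).symm)
      all_goals rfl
    | 1 =>
      rw [quasiIsoAt_iff_exactAt' _ _ (ChainComplex.exactAt_succ_single_obj _ _)]
      have := hS.mono_f
      exact P.augmentComplex_exactAt_one
    | n + 2 =>
      rw [quasiIsoAt_iff_exactAt' _ _ (ChainComplex.exactAt_succ_single_obj _ _)]
      exact P.augmentComplex_exactAt_succ_succ n⟩

end CategoryTheory.ProjectiveResolution

open Opposite in
theorem isZero_Ext_one_of_forall_extends {R : Type*} [Ring R] {C : Type*} [Category* C]
    [Abelian C] [Linear R C] [EnoughProjectives C] {S : ShortComplex C} (hS : S.ShortExact)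
    [Projective S.X₂] (N : C) (hext : ∀ k : S.X₁ ⟶ N, ∃ e : S.X₂ ⟶ N, S.f ≫ e = k) :
    IsZero (((Ext R C 1).obj (op S.X₃)).obj N) := by
  let Q := ProjectiveResolution.of S.X₁
  refine IsZero.of_iso ?_ ((Q.ofShortExact hS).isoExt 1 N)
  rw [← HomologicalComplex.exactAt_iff_isZero_homology,
    HomologicalComplex.exactAt_iff' _ 0 1 2 (by simp) (by simp), ShortComplex.moduleCat_exact_iff]
  intro φ hφ
  obtain ⟨k, hk⟩ := Q.exact_augmentation.desc' φ hφ
  obtain ⟨e, rfl⟩ := hext k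
  exact ⟨e, hk ▸ Category.assoc _ _ _⟩

theorem Module.Finite.dual_of_isNoetherianRing {R M : Type*} [CommRing R] [IsNoetherianRing R]
    [AddCommGroup M] [Module R M] [Module.Finite R M] : Module.Finite R (Module.Dual R M) := by
  obtain ⟨n, p, hp⟩ := Module.Finite.exists_fin' R M
  exact Module.Finite.of_injective p.dualMap (LinearMap.dualMap_injective_of_surjective hp)

section SpanningDual

variable {R M ι : Type*} [CommRing R] [AddCommGroup M] [Module R M] {ψ : ι → Module.Dual R M}

theorem LinearMap.dualMap_pi_surjective (hψ : Submodule.span R (Set.range ψ) = ⊤) :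
    Function.Surjective (LinearMap.pi ψ).dualMap := by
  rw [← LinearMap.range_eq_top, eq_top_iff, ← hψ, Submodule.span_le]
  rintro _ ⟨i, rfl⟩
  exact ⟨LinearMap.proj i, rfl⟩

theorem LinearMap.pi_injective_of_injective_eval (hψ : Submodule.span R (Set.range ψ) = ⊤)
    (htl : Function.Injective (Module.Dual.eval R M)) : Function.Injective (LinearMap.pi ψ) := by
  rw [← LinearMap.ker_eq_bot, LinearMap.ker_eq_bot']
  intro x hx
  have : Module.Dual.eval R M x = 0 := LinearMap.ext_on_range hψ fun i => congrFun hx i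
  exact htl (this.trans (map_zero _).symm)

end SpanningDual

theorem extVanishes_one_quotient_of_dualMap_surjective {R M F : Type u} [CommRing R]
    [AddCommGroup M] [Module R M] [AddCommGroup F] [Module R F] [Module.Projective R F]
    {f : M →ₗ[R] F} (hf : Function.Injective f) (hdual : Function.Surjective f.dualMap) :
    ExtVanishes R (ModuleCat.of R (F ⧸ LinearMap.range f)) (ModuleCat.of R R) 1 := by
  let S := ModuleCat.shortComplexOfCompEqZero f (LinearMap.range f).mkQ (LinearMap.range_mkQ_comp f)
  have hS : S.ShortExact := ModuleCat.shortComplex_shortExact S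
    (LinearMap.exact_map_mkQ_range f) hf (Submodule.mkQ_surjective _)
  have : Projective S.X₂ := (IsProjective.iff_projective F).1 ‹_›
  refine ModuleCat.subsingleton_of_isZero (isZero_Ext_one_of_forall_extends hS _ fun k => ?_)
  obtain ⟨e, he⟩ := hdual k.hom
  exact ⟨ModuleCat.ofHom e, ModuleCat.hom_ext he⟩

theorem pushforward_of_torsionless_general
    (R : Type u) [CommRing R] [IsNoetherianRing R]
    (X : ModuleCat.{u} R) (hX : Module.Finite R X)
    (htl : Function.Injective (Module.Dual.eval R (X : Type u))) :
    ∃ F X₁ : ModuleCat.{u} R, IsFinFree R F ∧ Module.Finite R X₁ ∧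
      SES R X F X₁ ∧ ExtVanishes R X₁ (ModuleCat.of R R) 1 := by
  have := Module.Finite.dual_of_isNoetherianRing (R := R) (M := X)
  obtain ⟨n, ψ, hψ⟩ := Module.Finite.exists_fin (R := R) (M := Module.Dual R X)
  have hinj := LinearMap.pi_injective_of_injective_eval hψ htl
  refine ⟨ModuleCat.of R (Fin n → R),
    ModuleCat.of R ((Fin n → R) ⧸ LinearMap.range (LinearMap.pi ψ)),
    ⟨inferInstance, inferInstance⟩, inferInstance,
    ⟨LinearMap.pi ψ, (LinearMap.range _).mkQ, hinj, Submodule.mkQ_surjective _,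
      (Submodule.ker_mkQ _).symm⟩,
    extVanishes_one_quotient_of_dualMap_surjective hinj (LinearMap.dualMap_pi_surjective hψ)⟩

theorem pushforward_of_torsionless
    (R : Type u) [CommRing R] [IsNoetherianRing R] [IsLocalRing R]
    (X : ModuleCat.{u} R) (hX : Module.Finite R X)
    (htl : Function.Injective (Module.Dual.eval R (X : Type u))) :
    ∃ F X₁ : ModuleCat.{u} R, IsFinFree R F ∧ Module.Finite R X₁ ∧
      SES R X F X₁ ∧ ExtVanishes R X₁ (ModuleCat.of R R) 1 :=
  pushforward_of_torsionless_general R X hX htl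
end
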